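/- arXiv:2306.06383 — 2 statements merged into one kernel-verified Lean document; each statement's English description precedes it below -/
import Mathlib

section
/- Let n ≥ 2, s ≥ 1, let D be a positive basis of ℝ^n with n+s elements, and let D ∈ ℝ^{n×(n+s)} be a matrix representation of D. If there exists a permutation matrix P ∈ ℝ^{(n+s)×(n+s)} such that the Gram matrix G(DP) = (DP)ᵀ(DP) is block diagonal with s diagonal blocks, then D is an orthogonally structured positive basis, and a decomposition of D into s minimal positive bases of pairwise orthogonal subspaces summing to ℝ^n is given by the groups of columns of DP corresponding to the s diagonal blocks. -/
/-! The Gram hypothesis says that the blocks span pairwise orthogonal subspaces `L k`. Writing a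
vector as a nonnegative combination of `D` and projecting onto `L k` kills every block but the
`k`-th, so block `k` positively spans `L k`; an element of block `k` that is superfluous there is
then superfluous in `D`. A nonempty positive spanning set of `L k` has at least `dim L k + 1`
elements, the `L k` span `ℝ^n`, and `D` has only `n + s` elements, so every block has exactly
`dim L k + 1`. -/

open scoped RealInnerProductSpace

noncomputable section

/-- Shorthand for the Euclidean space `ℝ^n`. -/
abbrev Euc (n : ℕ) := EuclideanSpace ℝ (Fin n)

/-- The positive span of a finite family of vectors: the set of all
linear combinations with nonnegative coefficients. -/
def pspan {n : ℕ} {ι : Type*} [Fintype ι] (D : ι → Euc n) : Set (Euc n) :=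
  { x | ∃ c : ι → ℝ, (∀ i, 0 ≤ c i) ∧ x = ∑ i, c i • D i }

/-- `D` is a positive spanning set (PSS) of the subspace `L`. -/
def IsPSS {n : ℕ} {ι : Type*} [Fintype ι] (D : ι → Euc n)
    (L : Submodule ℝ (Euc n)) : Prop :=
  pspan D = (L : Set (Euc n))

/-- `D` is a positive basis of `L`: a PSS of `L` such that removing any single
element (one instance of it) destroys the positive spanning property. -/
def IsPosBasis {n : ℕ} {ι : Type*} [Fintype ι] [DecidableEq ι] (D : ι → Euc n)
    (L : Submodule ℝ (Euc n)) : Prop :=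
  IsPSS D L ∧ ∀ i : ι, ¬ IsPSS (fun j : {j : ι // j ≠ i} => D j) L

/-- `D` is a minimal positive basis of `L`: a positive basis with `dim L + 1` elements. -/
def IsMinPosBasis {n : ℕ} {ι : Type*} [Fintype ι] [DecidableEq ι] (D : ι → Euc n)
    (L : Submodule ℝ (Euc n)) : Prop :=
  IsPosBasis D L ∧ Fintype.card ι = Module.finrank ℝ L + 1

/-- The positive `k`-span of a finite family `D`: the intersection of the positive
spans of all of its subfamilies of cardinality at least `|D| - k + 1`. -/
def pspanK {n : ℕ} {ι : Type*} [Fintype ι] (k : ℕ) (D : ι → Euc n) : Set (Euc n) :=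
  ⋂ (S : Finset ι) (_ : Fintype.card ι - k + 1 ≤ S.card),
    pspan (fun j : {j : ι // j ∈ S} => D (j : ι))

/-- `D` is a positive `k`-spanning set (PkSS) of `L`. -/
def IsPkSS {n : ℕ} {ι : Type*} [Fintype ι] (k : ℕ) (D : ι → Euc n)
    (L : Submodule ℝ (Euc n)) : Prop :=
  pspanK k D = (L : Set (Euc n))

/-- The `k`-span of a finite family `D`: the intersection of the linear spans of
all of its subfamilies of cardinality at least `|D| - k + 1`. -/
def spanK {n : ℕ} {ι : Type*} [Fintype ι] (k : ℕ) (D : ι → Euc n) : Set (Euc n) :=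
  ⋂ (S : Finset ι) (_ : Fintype.card ι - k + 1 ≤ S.card),
    (Submodule.span ℝ (D '' (S : Set ι)) : Set (Euc n))

/-- `D` is a positive `k`-basis of `L`: a PkSS of `L` such that removing any single
element destroys the positive `k`-spanning property. -/
def IsPkBasis {n : ℕ} {ι : Type*} [Fintype ι] [DecidableEq ι] (k : ℕ) (D : ι → Euc n)
    (L : Submodule ℝ (Euc n)) : Prop :=
  IsPkSS k D L ∧ ∀ i : ι, ¬ IsPkSS k (fun j : {j : ι // j ≠ i} => D j) L

/-- The cosine measure of a finite family of nonzero vectors. -/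
def cosm {n : ℕ} {ι : Type*} [Fintype ι] (D : ι → Euc n) : ℝ :=
  ⨅ u : {u : Euc n // ‖u‖ = 1}, ⨆ i : ι, ⟪(u : Euc n), D i⟫ / ‖D i‖

/-- The `k`-cosine measure of a finite family of nonzero vectors. -/
def cosmK {n : ℕ} {ι : Type*} [Fintype ι] (k : ℕ) (D : ι → Euc n) : ℝ :=
  ⨅ u : {u : Euc n // ‖u‖ = 1},
    ⨆ S : {S : Finset ι // S.card = k},
      ⨅ j : {j : ι // j ∈ (S : Finset ι)}, ⟪(u : Euc n), D (j : ι)⟫ / ‖D (j : ι)‖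

/-- The cosine vector set: the unit vectors attaining the cosine measure. -/
def cosVSet {n : ℕ} {ι : Type*} [Fintype ι] (D : ι → Euc n) : Set (Euc n) :=
  { u | ‖u‖ = 1 ∧ (⨆ i : ι, ⟪u, D i⟫ / ‖D i‖) = cosm D }

/-- `D` is orthogonally structured with decomposition given by the pairwise orthogonal
subspaces `L i` (whose sum is `ℝ^n`) and the grouping map `g`: the subfamily of `D`
corresponding to each fiber of `g` is a minimal positive basis of the associated subspace. -/
def IsOSPBDecomp {n s : ℕ} {ι : Type*} [Fintype ι] [DecidableEq ι] (D : ι → Euc n)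
    (L : Fin s → Submodule ℝ (Euc n)) (g : ι → Fin s) : Prop :=
  (∀ i i' : Fin s, i ≠ i' → ∀ x ∈ L i, ∀ y ∈ L i', ⟪x, y⟫ = 0) ∧
  (⨆ i, L i) = (⊤ : Submodule ℝ (Euc n)) ∧
  ∀ i : Fin s, IsMinPosBasis (fun j : {j : ι // g j = i} => D (j : ι)) (L i)

/-- The Gram matrix `G(B) = BᵀB` of the subfamily of `D` indexed by `S`. -/
def gramSub {n : ℕ} {ι : Type*} [Fintype ι] (D : ι → Euc n) (S : Finset ι) :
    Matrix {j : ι // j ∈ S} {j : ι // j ∈ S} ℝ :=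
  Matrix.of fun j j' => ⟪D (j : ι), D (j' : ι)⟫

/-- The quantity `γ_B = 1/√(1ᵀ G(B)⁻¹ 1)` associated with the subfamily of `D`
indexed by `S`. -/
def gammaSub {n : ℕ} {ι : Type*} [Fintype ι] [DecidableEq ι] (D : ι → Euc n)
    (S : Finset ι) : ℝ :=
  1 / Real.sqrt (∑ j : {j : ι // j ∈ S}, ∑ j' : {j : ι // j ∈ S}, (gramSub D S)⁻¹ j j')

/-- The subfamily of `D` indexed by `S` is a linear basis of `L`. -/
def IsBasisSub {n : ℕ} {ι : Type*} [Fintype ι] (D : ι → Euc n) (S : Finset ι)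
    (L : Submodule ℝ (Euc n)) : Prop :=
  LinearIndependent ℝ (fun j : {j : ι // j ∈ S} => D (j : ι)) ∧
  Submodule.span ℝ (D '' (S : Set ι)) = L

/-- `R` is a rotation matrix: `RᵀR = I` and `det R = 1`. -/
def IsRotation {n : ℕ} (R : Matrix (Fin n) (Fin n) ℝ) : Prop :=
  R.transpose * R = 1 ∧ R.det = 1

/-- Action of an `n × n` matrix on the Euclidean space `ℝ^n`. -/
def rotAct {n : ℕ} (R : Matrix (Fin n) (Fin n) ℝ) (x : Euc n) : Euc n :=
  Matrix.toEuclideanLin R x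

/-- The quantity `ρ_D` of Lemma 4.13, where `P i i'` denotes the orthogonal projection
of `d_i` onto `L ∩ {v_{i'}}^⊥`. -/
def rhoQ {n : ℕ} {ι : Type*} [Fintype ι] (D : ι → Euc n) (P : ι → ι → Euc n) : ℝ :=
  ⨆ p : ι × ι, ⟪D p.1, P p.1 p.2⟫ / (‖D p.1‖ * ‖P p.1 p.2‖)

open scoped NNReal

theorem Submodule.finrank_iSup_le_sum {K V κ : Type*} [DivisionRing K] [AddCommGroup V]
    [Module K V] [FiniteDimensional K V] [Fintype κ] (L : κ → Submodule K V) :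
    Module.finrank K ↥(⨆ k, L k) ≤ ∑ k, Module.finrank K (L k) := by
  classical
  rw [← Finset.sup_univ_eq_iSup]
  induction (Finset.univ : Finset κ) using Finset.induction_on with
  | empty => simp
  | insert a t ha ih =>
    rw [Finset.sup_insert, Finset.sum_insert ha]
    exact (Submodule.finrank_add_le_finrank_add_finrank _ _).trans (by omega)

section PositiveSpan

variable {n : ℕ} {ι ι' : Type*} [Fintype ι] [Fintype ι']

theorem pspan_eq_span_range (D : ι → Euc n) :
    pspan D = (Submodule.span ℝ≥0 (Set.range D) : Set (Euc n)) := by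
  ext x
  rw [SetLike.mem_coe, Submodule.mem_span_range_iff_exists_fun]
  constructor
  · rintro ⟨c, hc, rfl⟩
    exact ⟨fun i => ⟨c i, hc i⟩, rfl⟩
  · rintro ⟨c, rfl⟩
    exact ⟨fun i => c i, fun i => (c i).2, rfl⟩

theorem pspan_mono {D : ι → Euc n} {D' : ι' → Euc n} (h : Set.range D' ⊆ Set.range D) :
    pspan D' ⊆ pspan D := by
  rw [pspan_eq_span_range, pspan_eq_span_range]
  exact Submodule.span_mono h

theorem pspan_congr_range {D : ι → Euc n} {D' : ι' → Euc n} (h : Set.range D' = Set.range D) :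
    pspan D' = pspan D :=
  (pspan_mono h.le).antisymm (pspan_mono h.ge)

theorem mem_pspan (D : ι → Euc n) (i : ι) : D i ∈ pspan D := by
  rw [pspan_eq_span_range]
  exact Submodule.subset_span ⟨i, rfl⟩

theorem pspan_subset_span (D : ι → Euc n) :
    pspan D ⊆ (Submodule.span ℝ (Set.range D) : Set (Euc n)) := by
  rw [pspan_eq_span_range]
  exact Submodule.span_le_restrictScalars ℝ≥0 ℝ _

theorem IsPSS.span_range_eq {D : ι → Euc n} {L : Submodule ℝ (Euc n)} (h : IsPSS D L) :
    Submodule.span ℝ (Set.range D) = L := by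
  refine le_antisymm ?_ fun x hx => pspan_subset_span D (h ▸ hx)
  rw [Submodule.span_le]
  rintro _ ⟨i, rfl⟩
  exact h ▸ mem_pspan D i

theorem IsPSS.erase_of_mem_pspan [DecidableEq ι] {D : ι → Euc n} {L : Submodule ℝ (Euc n)}
    (h : IsPSS D L) {i : ι} (hi : D i ∈ pspan (fun j : {j // j ≠ i} => D j)) :
    IsPSS (fun j : {j // j ≠ i} => D j) L := by
  unfold IsPSS at h ⊢
  rw [← h]
  refine (pspan_mono (Set.range_comp_subset_range _ D)).antisymm ?_
  rw [pspan_eq_span_range] at hi ⊢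
  rw [pspan_eq_span_range, SetLike.coe_subset_coe, Submodule.span_le]
  rintro _ ⟨j, rfl⟩
  by_cases hj : j = i
  · exact hj ▸ hi
  · exact Submodule.subset_span ⟨⟨j, hj⟩, rfl⟩

theorem finrank_add_one_le_card_of_isPSS [Nonempty ι] {D : ι → Euc n}
    {L : Submodule ℝ (Euc n)} (h : IsPSS D L) :
    Module.finrank ℝ L + 1 ≤ Fintype.card ι := by
  classical
  have hspan := h.span_range_eq
  have hle : Module.finrank ℝ L ≤ Fintype.card ι := hspan ▸ finrank_range_le_card D
  refine Nat.succ_le_of_lt (hle.lt_of_ne fun hcard => ?_)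
  -- `D` would be a basis of `L`, yet `-D i` is a nonnegative combination of `D`.
  have hli : LinearIndependent ℝ D := by
    rw [linearIndependent_iff_card_eq_finrank_span, Set.finrank, hspan, hcard]
  obtain ⟨i⟩ := ‹Nonempty ι›
  have hneg : -D i ∈ pspan D := by
    rw [h]
    exact L.neg_mem (hspan ▸ Submodule.subset_span ⟨i, rfl⟩)
  obtain ⟨c, hc, hc_eq⟩ := hneg
  have hzero : ∑ j, (c j + (Pi.single i 1 : ι → ℝ) j) • D j = 0 := by
    simp [add_smul, Finset.sum_add_distrib, ← hc_eq]
  have := Fintype.linearIndependent_iff.mp hli _ hzero i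
  simp only [Pi.single_eq_same] at this
  linarith [hc i]

theorem IsPosBasis.comp_equiv [DecidableEq ι] [DecidableEq ι'] {D : ι → Euc n}
    {L : Submodule ℝ (Euc n)} (h : IsPosBasis D L) (e : ι' ≃ ι) : IsPosBasis (D ∘ e) L := by
  refine ⟨(pspan_congr_range (EquivLike.range_comp D e)).trans h.1, fun i hi => h.2 (e i) ?_⟩
  refine (pspan_congr_range ?_).symm.trans hi
  ext x
  constructor
  · rintro ⟨⟨j, hj⟩, rfl⟩
    exact ⟨⟨e j, e.injective.ne hj⟩, rfl⟩
  · rintro ⟨⟨k, hk⟩, rfl⟩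
    exact ⟨⟨e.symm k, fun he => hk (by simp [← he])⟩, by simp⟩

end PositiveSpan

theorem Nat.eq_add_one_of_add_one_le_of_sum_le {κ : Type*} [Fintype κ] {a b : κ → ℕ}
    (hle : ∀ k, b k + 1 ≤ a k) (hsum : ∑ k, a k ≤ ∑ k, b k + Fintype.card κ) (k : κ) :
    a k = b k + 1 := by
  have hsum' : ∑ k, (b k + 1) = ∑ k, a k := by
    refine le_antisymm (Finset.sum_le_sum fun k _ => hle k) ?_
    simpa [Finset.sum_add_distrib] using hsum
  exact ((Finset.sum_eq_sum_iff_of_le fun k _ => hle k).mp hsum' k (Finset.mem_univ k)).symm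

section Blocks

variable {n : ℕ} {ι κ : Type*} {E : ι → Euc n} {g : ι → κ}

variable (E g) in
def blockSpan (k : κ) : Submodule ℝ (Euc n) :=
  Submodule.span ℝ (E '' {j | g j = k})

theorem apply_mem_blockSpan (j : ι) : E j ∈ blockSpan E g (g j) :=
  Submodule.subset_span ⟨j, rfl, rfl⟩

variable (E g) in
theorem iSup_blockSpan : ⨆ k, blockSpan E g k = Submodule.span ℝ (Set.range E) := by
  show ⨆ k, Submodule.span ℝ (E '' {j | g j = k}) = _
  rw [← Submodule.span_iUnion, ← Set.image_iUnion,
    Set.iUnion_eq_univ_iff.mpr fun j => ⟨g j, rfl⟩, Set.image_univ]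

theorem blockSpan_isOrtho (horth : ∀ j j', g j ≠ g j' → ⟪E j, E j'⟫ = 0) {k k' : κ}
    (hk : k ≠ k') : blockSpan E g k ⟂ blockSpan E g k' := by
  refine Submodule.isOrtho_span.mpr ?_
  rintro _ ⟨j, rfl, rfl⟩ _ ⟨j', rfl, rfl⟩
  exact horth j j' hk

theorem IsPSS.isPSS_blockSpan [Fintype ι] [DecidableEq κ] {L : Submodule ℝ (Euc n)}
    (hE : IsPSS E L) (horth : ∀ j j', g j ≠ g j' → ⟪E j, E j'⟫ = 0) (k : κ) :
    IsPSS (fun j : {j // g j = k} => E j) (blockSpan E g k) := by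
  refine ((pspan_subset_span _).trans ?_).antisymm fun x hx => ?_
  · exact Submodule.span_mono (by rintro _ ⟨j, rfl⟩; exact ⟨j, j.2, rfl⟩)
  have hxL : x ∈ L := by
    rw [← hE.span_range_eq]
    exact Submodule.span_mono (Set.image_subset_range _ _) hx
  obtain ⟨c, hc, rfl⟩ : x ∈ pspan E := hE ▸ hxL
  rw [← Finset.sum_filter_add_sum_filter_not _ (fun j => g j = k)] at hx ⊢
  set y := ∑ j ∈ Finset.univ.filter (fun j => g j = k), c j • E j
  set z := ∑ j ∈ Finset.univ.filter (fun j => g j ≠ k), c j • E j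
  have hyL : y ∈ blockSpan E g k := Submodule.sum_mem _ fun j hj =>
    Submodule.smul_mem _ _ ((Finset.mem_filter.mp hj).2 ▸ apply_mem_blockSpan j)
  have hzL : z ∈ blockSpan E g k := by simpa using sub_mem hx hyL
  have hzL' : z ∈ (blockSpan E g k)ᗮ := Submodule.sum_mem _ fun j hj => Submodule.smul_mem _ _
    (blockSpan_isOrtho horth (Finset.mem_filter.mp hj).2 (apply_mem_blockSpan j))
  have hz : z = 0 :=
    (Submodule.orthogonal_disjoint _).le_bot (Submodule.mem_inf.mpr ⟨hzL, hzL'⟩)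
  rw [hz, add_zero]
  exact ⟨fun j => c j, fun j => hc j, Finset.sum_subtype _ (by simp) (fun j => c j • E j)⟩

theorem IsPosBasis.not_isPSS_erase_block [Fintype ι] [DecidableEq ι] [DecidableEq κ]
    {L : Submodule ℝ (Euc n)} (hE : IsPosBasis E L) {k : κ} (j₀ : {j // g j = k}) :
    ¬ IsPSS (fun j : {j : {j // g j = k} // j ≠ j₀} => E j) (blockSpan E g k) := by
  intro hsub
  have hmem : E j₀ ∈ pspan (fun j : {j : {j // g j = k} // j ≠ j₀} => E j) := by
    rw [show pspan _ = _ from hsub]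
    exact Submodule.subset_span ⟨j₀, j₀.2, rfl⟩
  refine hE.2 j₀ (hE.1.erase_of_mem_pspan (pspan_mono ?_ hmem))
  rintro _ ⟨j, rfl⟩
  exact ⟨⟨j, fun h => j.2 (Subtype.ext h)⟩, rfl⟩

theorem IsPosBasis.isOSPBDecomp_blockSpan [Fintype ι] [DecidableEq ι] {s : ℕ} {g : ι → Fin s}
    (hE : IsPosBasis E ⊤) (hcard : Fintype.card ι = n + s) (hg : Function.Surjective g)
    (horth : ∀ j j', g j ≠ g j' → ⟪E j, E j'⟫ = 0) :
    IsOSPBDecomp E (blockSpan E g) g := by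
  have hsup : ⨆ k, blockSpan E g k = ⊤ := (iSup_blockSpan E g).trans hE.1.span_range_eq
  have hPSS := hE.1.isPSS_blockSpan horth
  have hcard_ge k : Module.finrank ℝ (blockSpan E g k) + 1 ≤ Fintype.card {j // g j = k} :=
    have : Nonempty {j // g j = k} := ⟨⟨_, (hg k).choose_spec⟩⟩
    finrank_add_one_le_card_of_isPSS (hPSS k)
  have hcard_sum : ∑ k, Fintype.card {j // g j = k} ≤
      ∑ k, Module.finrank ℝ (blockSpan E g k) + Fintype.card (Fin s) := calc
    _ = n + s := by rw [← Fintype.card_sigma, Fintype.card_congr (Equiv.sigmaFiberEquiv g), hcard]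
    _ = Module.finrank ℝ ↥(⨆ k, blockSpan E g k) + s := by
      rw [hsup, finrank_top, finrank_euclideanSpace_fin]
    _ ≤ _ := by simpa using Submodule.finrank_iSup_le_sum (blockSpan E g)
  refine ⟨fun k k' hk => Submodule.isOrtho_iff_inner_eq.mp (blockSpan_isOrtho horth hk), hsup,
    fun k => ⟨⟨hPSS k, hE.not_isPSS_erase_block⟩, ?_⟩⟩
  exact Nat.eq_add_one_of_add_one_le_of_sum_le hcard_ge hcard_sum k

end Blocks

theorem gram_block_diagonal_gives_ospb_decomp_general {n s : ℕ}
    (D : Fin (n + s) → Euc n)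
    (hD : IsPosBasis D (⊤ : Submodule ℝ (Euc n)))
    (σ : Equiv.Perm (Fin (n + s))) (b : Fin (n + s) → Fin s)
    (hsurj : Function.Surjective b)
    (hblock : ∀ j j' : Fin (n + s), b j ≠ b j' → ⟪D (σ j), D (σ j')⟫ = 0) :
    IsOSPBDecomp (fun j => D (σ j))
      (fun i => Submodule.span ℝ ((fun j => D (σ j)) '' {j | b j = i})) b :=
  (hD.comp_equiv σ).isOSPBDecomp_blockSpan (Fintype.card_fin _) hsurj hblock

/-- Corollary 3.3: if, after permuting the elements of a positive
basis `D` of `ℝ^n` by `σ`, the Gram matrix of the permuted family is block diagonal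
with `s` diagonal blocks (blocks = fibers of a monotone surjection `b` onto `Fin s`),
then `D` is an OSPB whose decomposition is given by the groups of columns
corresponding to the blocks. -/
theorem gram_block_diagonal_gives_ospb_decomp {n s : ℕ} (hn : 2 ≤ n) (hs : 1 ≤ s)
    (D : Fin (n + s) → Euc n) (h0 : ∀ i, D i ≠ 0)
    (hD : IsPosBasis D (⊤ : Submodule ℝ (Euc n)))
    (σ : Equiv.Perm (Fin (n + s))) (b : Fin (n + s) → Fin s)
    (hmono : Monotone b) (hsurj : Function.Surjective b)
    (hblock : ∀ j j' : Fin (n + s), b j ≠ b j' → ⟪D (σ j), D (σ j')⟫ = 0) :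
    IsOSPBDecomp (fun j => D (σ j))
      (fun i => Submodule.span ℝ ((fun j => D (σ j)) '' {j | b j = i})) b :=
  gram_block_diagonal_gives_ospb_decomp_general D hD σ b hsurj hblock
end
end

section
/- Let D be an orthogonally structured positive basis of ℝ^n with n+s elements, s ∈ {1,…,n}. Let R^(1), …, R^(k) be k rotation matrices in ℝ^{n×n}, and for each j = 1,…,k let D^(j) = { R^(j) d : d ∈ D } (as a family). Then the family D^(1:k) = D^(1) ∪ ⋯ ∪ D^(k) is a positive k-spanning set of ℝ^n and its k-cosine measure satisfies cm_k(D^(1:k)) ≥ cm(D). -/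
open scoped RealInnerProductSpace

noncomputable section

/-! Each block of an OSPB positively spans its subspace and the subspaces sum to `ℝⁿ`, so `D`
positively spans `ℝⁿ`, and so does every rotated copy `R⁽ʲ⁾ D`. Removing at most `k - 1` vectors
from the `k` copies leaves one copy intact, whence the positive `k`-spanning property. Given a unit
vector `u`, each copy contains a vector `R⁽ʲ⁾ d` with `cos(u, R⁽ʲ⁾ d) = cos(R⁽ʲ⁾ᵀ u, d) ≥ cm(D)`;
these `k` vectors form a `k`-subset witnessing `cm_k ≥ cm(D)`. -/

section

open Matrix

variable {n : ℕ} {ι κ : Type*} [Fintype ι] [Fintype κ]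

lemma smul_mem_pspan (D : ι → Euc n) {c : ℝ} (hc : 0 ≤ c) (i : ι) : c • D i ∈ pspan D := by
  classical
  exact ⟨Pi.single i c, fun j => by by_cases h : j = i <;> simp [h, hc], by simp⟩

lemma zero_mem_pspan (D : ι → Euc n) : (0 : Euc n) ∈ pspan D :=
  ⟨0, fun _ => le_rfl, by simp⟩

lemma add_mem_pspan {D : ι → Euc n} {x y : Euc n} (hx : x ∈ pspan D) (hy : y ∈ pspan D) :
    x + y ∈ pspan D := by
  obtain ⟨c, hc, rfl⟩ := hx
  obtain ⟨c', hc', rfl⟩ := hy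
  exact ⟨c + c', fun i => add_nonneg (hc i) (hc' i), by simp [add_smul, Finset.sum_add_distrib]⟩

lemma pspan_comp_subset (F : κ → Euc n) (e : ι → κ) : pspan (F ∘ e) ⊆ pspan F := by
  rintro _ ⟨c, hc, rfl⟩
  exact Finset.sum_induction _ (· ∈ pspan F) (fun _ _ => add_mem_pspan) (zero_mem_pspan F)
    fun i _ => smul_mem_pspan F (hc i) (e i)

lemma pspan_comp_linearMap (f : Euc n →ₗ[ℝ] Euc n) (D : ι → Euc n) :
    pspan (f ∘ D) = f '' pspan D := by
  ext x
  constructor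
  · rintro ⟨c, hc, rfl⟩
    exact ⟨∑ i, c i • D i, ⟨c, hc, rfl⟩, by simp⟩
  · rintro ⟨_, ⟨c, hc, rfl⟩, rfl⟩
    exact ⟨c, hc, by simp⟩

lemma pspan_eq_univ_of_iSup_eq_top {s : ℕ} {D : ι → Euc n} {L : Fin s → Submodule ℝ (Euc n)}
    {g : ι → Fin s} (hL : ⨆ i, L i = ⊤)
    (hD : ∀ i, IsPSS (fun j : {j : ι // g j = i} => D j) (L i)) : pspan D = Set.univ := by
  refine Set.eq_univ_of_forall fun x => ?_
  refine Submodule.iSup_induction L (motive := (· ∈ pspan D)) (hL ▸ Submodule.mem_top)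
    (fun i y hy => ?_) (zero_mem_pspan D) (fun _ _ => add_mem_pspan)
  exact pspan_comp_subset D Subtype.val ((hD i).ge hy)

lemma exists_forall_prodMk_mem {S : Finset (κ × ι)}
    (hS : Fintype.card (κ × ι) - Fintype.card κ + 1 ≤ S.card) : ∃ j, ∀ i, (j, i) ∈ S := by
  classical
  by_contra! h
  choose f hf using h
  have hκ : Fintype.card κ ≤ Sᶜ.card :=
    Finset.card_le_card_of_injOn (fun j => (j, f j)) (fun j _ => by simpa using hf j)
      fun _ _ _ _ h => congrArg Prod.fst h
  have hcompl := Finset.card_compl S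
  have hle := Finset.card_le_univ S
  omega

lemma isPkSS_top_of_pspan_eq_univ (E : κ × ι → Euc n)
    (hE : ∀ j, pspan (fun i => E (j, i)) = Set.univ) :
    IsPkSS (Fintype.card κ) E ⊤ := by
  refine Set.eq_univ_of_forall fun x => Set.mem_iInter₂.mpr fun S hS => ?_
  obtain ⟨j, hj⟩ := exists_forall_prodMk_mem hS
  exact pspan_comp_subset (fun p : {p // p ∈ S} => E p) (fun i => ⟨(j, i), hj i⟩)
    ((hE j).symm ▸ Set.mem_univ x)

lemma rotAct_rotAct (A B : Matrix (Fin n) (Fin n) ℝ) (x : Euc n) :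
    rotAct A (rotAct B x) = rotAct (A * B) x := by
  simp [rotAct]

lemma rotAct_one (x : Euc n) : rotAct 1 x = x := by
  simp [rotAct]

lemma inner_rotAct_left (R : Matrix (Fin n) (Fin n) ℝ) (x y : Euc n) :
    ⟪rotAct R x, y⟫ = ⟪x, rotAct Rᵀ y⟫ := by
  rw [rotAct, rotAct, ← conjTranspose_eq_transpose_of_trivial,
    toEuclideanLin_conjTranspose_eq_adjoint, LinearMap.adjoint_inner_right]

lemma norm_rotAct {R : Matrix (Fin n) (Fin n) ℝ} (hR : Rᵀ * R = 1) (x : Euc n) :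
    ‖rotAct R x‖ = ‖x‖ := by
  rw [← sq_eq_sq₀ (norm_nonneg _) (norm_nonneg _), ← real_inner_self_eq_norm_sq,
    ← real_inner_self_eq_norm_sq, inner_rotAct_left, rotAct_rotAct, hR, rotAct_one]

lemma rotAct_surjective {R : Matrix (Fin n) (Fin n) ℝ} (hR : Rᵀ * R = 1) :
    Function.Surjective (rotAct R) :=
  fun x => ⟨rotAct Rᵀ x, by rw [rotAct_rotAct, mul_eq_one_comm.mp hR, rotAct_one]⟩

lemma pspan_rotAct_eq_univ {R : Matrix (Fin n) (Fin n) ℝ} (hR : Rᵀ * R = 1) {D : ι → Euc n}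
    (hD : pspan D = Set.univ) : pspan (fun i => rotAct R (D i)) = Set.univ := by
  change pspan (toEuclideanLin R ∘ D) = _
  rw [pspan_comp_linearMap, hD]
  exact Set.image_univ_of_surjective (rotAct_surjective hR)

lemma abs_inner_div_norm_le (u d : Euc n) : |⟪u, d⟫ / ‖d‖| ≤ ‖u‖ := by
  rw [abs_div, abs_norm]
  exact div_le_of_le_mul₀ (norm_nonneg _) (norm_nonneg _) (abs_real_inner_le_norm u d)

lemma cosm_le_iSup_inner_div_norm [Nonempty ι] (D : ι → Euc n) {u : Euc n} (hu : ‖u‖ = 1) :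
    cosm D ≤ ⨆ i, ⟪u, D i⟫ / ‖D i‖ := by
  refine ciInf_le ⟨-1, ?_⟩ (⟨u, hu⟩ : {u : Euc n // ‖u‖ = 1})
  rintro _ ⟨v, rfl⟩
  obtain ⟨i⟩ := ‹Nonempty ι›
  refine le_ciSup_of_le (Set.finite_range _).bddAbove i ?_
  have := abs_inner_div_norm_le (v : Euc n) (D i)
  rw [v.2] at this
  exact neg_le_of_abs_le this

lemma exists_cosm_le_inner_div_norm [Nonempty ι] (D : ι → Euc n) {u : Euc n} (hu : ‖u‖ = 1) :
    ∃ i, cosm D ≤ ⟪u, D i⟫ / ‖D i‖ := by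
  obtain ⟨i, hi⟩ := Finite.exists_max fun i => ⟪u, D i⟫ / ‖D i‖
  exact ⟨i, (cosm_le_iSup_inner_div_norm D hu).trans (ciSup_le hi)⟩

lemma le_cosmK_of_forall_exists_finset [NeZero n] {k : ℕ} (hk : k ≠ 0) {E : ι → Euc n} {c : ℝ}
    (h : ∀ u : Euc n, ‖u‖ = 1 → ∃ S : Finset ι, S.card = k ∧ ∀ j ∈ S, c ≤ ⟪u, E j⟫ / ‖E j‖) :
    c ≤ cosmK k E := by
  obtain ⟨u₀, hu₀⟩ := exists_norm_eq (Euc n) zero_le_one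
  have : Nonempty {u : Euc n // ‖u‖ = 1} := ⟨⟨u₀, hu₀⟩⟩
  refine le_ciInf fun u => ?_
  obtain ⟨S, hSk, hS⟩ := h u u.2
  have : Nonempty {j // j ∈ S} := (Finset.card_pos.mp (hSk ▸ Nat.pos_of_ne_zero hk)).to_subtype
  exact le_ciSup_of_le (Set.finite_range _).bddAbove ⟨S, hSk⟩ (le_ciInf fun j => hS j j.2)

lemma cosm_le_cosmK_rotAct [NeZero n] [Nonempty ι] [Nonempty κ] (D : ι → Euc n)
    (R : κ → Matrix (Fin n) (Fin n) ℝ) (hR : ∀ j, (R j)ᵀ * R j = 1) :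
    cosm D ≤ cosmK (Fintype.card κ) (fun p : κ × ι => rotAct (R p.1) (D p.2)) := by
  refine le_cosmK_of_forall_exists_finset Fintype.card_ne_zero fun u hu => ?_
  have hRt (j : κ) : (R j)ᵀᵀ * (R j)ᵀ = 1 := by
    rw [transpose_transpose]; exact mul_eq_one_comm.mp (hR j)
  choose m hm using fun j => exists_cosm_le_inner_div_norm D
    ((norm_rotAct (hRt j) u).trans hu)
  have hinj : Function.Injective fun j => (j, m j) := fun _ _ h => congrArg Prod.fst h
  refine ⟨Finset.univ.map ⟨_, hinj⟩, by simp, Finset.forall_mem_map.mpr fun j _ => ?_⟩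
  dsimp only [Function.Embedding.coeFn_mk]
  rw [norm_rotAct (hR j)]
  simpa only [inner_rotAct_left, transpose_transpose] using hm j

end

theorem rotated_ospb_is_pkss_general {n s k : ℕ} (hs1 : 1 ≤ s) (hsn : s ≤ n) (hk : 1 ≤ k)
    (D : Fin (n + s) → Euc n)
    (L : Fin s → Submodule ℝ (Euc n)) (g : Fin (n + s) → Fin s)
    (hospb : IsOSPBDecomp D L g)
    (R : Fin k → Matrix (Fin n) (Fin n) ℝ) (hrot : ∀ j, IsRotation (R j)) :
    IsPkSS k (fun p : Fin k × Fin (n + s) => rotAct (R p.1) (D p.2))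
      (⊤ : Submodule ℝ (Euc n)) ∧
    cosm D ≤ cosmK k (fun p : Fin k × Fin (n + s) => rotAct (R p.1) (D p.2)) := by
  have hD : pspan D = Set.univ := pspan_eq_univ_of_iSup_eq_top hospb.2.1 fun i => (hospb.2.2 i).1.1
  have hpkss := isPkSS_top_of_pspan_eq_univ
    (fun p : Fin k × Fin (n + s) => rotAct (R p.1) (D p.2))
    fun j => pspan_rotAct_eq_univ (hrot j).1 hD
  have : NeZero n := ⟨by omega⟩
  have : Nonempty (Fin k) := ⟨⟨0, hk⟩⟩
  have hcos := cosm_le_cosmK_rotAct D R fun j => (hrot j).1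
  rw [Fintype.card_fin] at hpkss hcos
  exact ⟨hpkss, hcos⟩

/-- Proposition 4.10: let `D` be an OSPB of `ℝ^n` with `n+s`
elements (`1 ≤ s ≤ n`) and let `R^(1), …, R^(k)` be rotation matrices. Then the union
of the rotated families `D^(j) = {R^(j) d : d ∈ D}` is a positive `k`-spanning set of
`ℝ^n` whose `k`-cosine measure is at least `cm(D)`. -/
theorem rotated_ospb_is_pkss {n s k : ℕ} (hs1 : 1 ≤ s) (hsn : s ≤ n) (hk : 1 ≤ k)
    (D : Fin (n + s) → Euc n) (h0 : ∀ i, D i ≠ 0)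
    (L : Fin s → Submodule ℝ (Euc n)) (g : Fin (n + s) → Fin s)
    (hospb : IsOSPBDecomp D L g)
    (R : Fin k → Matrix (Fin n) (Fin n) ℝ) (hrot : ∀ j, IsRotation (R j)) :
    IsPkSS k (fun p : Fin k × Fin (n + s) => rotAct (R p.1) (D p.2))
      (⊤ : Submodule ℝ (Euc n)) ∧
    cosm D ≤ cosmK k (fun p : Fin k × Fin (n + s) => rotAct (R p.1) (D p.2)) :=
  rotated_ospb_is_pkss_general hs1 hsn hk D L g hospb R hrot
end
end
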